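/- Assume (1 − δ⋆)·S̃ ≼ S ≼ S̃ for some δ⋆ with 0 < δ⋆ ≤ 1/(4κ) where κ = L/μ, let 0 < α⋆ ≤ 1/L, let u⋆ ∈ ker B satisfy ⟨∇f(u⋆), v⟩ = 0 for all v ∈ ker B, and let u⋆φ ∈ V satisfy u⋆φ = P̃(u⋆φ − α⋆ M⁻¹ ∇f(u⋆φ)). Then: (i) ‖u⋆φ − u⋆‖_M ≤ 3·√κ·μ^{−1/2}·δ⋆·√α⋆·‖∇f(u⋆)‖_{M⁻¹}; (ii) ‖∇f(u⋆φ) − ∇f(u⋆)‖_{M⁻¹} ≤ 3·√L·κ·δ⋆·√α⋆·‖∇f(u⋆)‖_{M⁻¹}; and (iii) ‖∇f(u⋆φ)‖_{M⁻¹} ≤ 2·‖∇f(u⋆)‖_{M⁻¹}. -/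

import Mathlib

/-!
Put `y := S̃⁻¹ B (uφ - α M⁻¹ ∇f uφ)`. The fixed-point equation says `α ∇f uφ = -Bᵀ y` and
`B uφ = (S̃ - S) y`, so `∇f uφ` is orthogonal to `ker B` and the constraint residual is
`(S̃ - S) y`. From `0 ≼ S̃ - S ≼ δ S̃` and `(1 - δ) S̃ ≼ S` we get
`‖B uφ‖_{S⁻¹} ≤ δ / (1 - δ) · α ‖∇f uφ‖_{M⁻¹}`.

The lift `q := M⁻¹ Bᵀ S⁻¹ B uφ` has `‖q‖_M = ‖B uφ‖_{S⁻¹}` and `uφ - u⋆ - q ∈ ker B`, so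
`⟪∇f uφ - ∇f u⋆, uφ - u⋆⟫ = ⟪∇f uφ - ∇f u⋆, q⟫`. Strong convexity and co-coercivity then bound
`‖uφ - u⋆‖_M` by `√κ ‖q‖_M` and `‖∇f uφ - ∇f u⋆‖_{M⁻¹}` by `L ‖q‖_M`. As `L α δ / (1 - δ) ≤ 1/3`,
the triangle inequality gives `‖∇f uφ‖_{M⁻¹} ≤ 3/2 ‖∇f u⋆‖_{M⁻¹}`, and the three bounds follow.
-/

open scoped RealInnerProductSpace

noncomputable section

/-- Loewner order: `X ≼ Y` iff `Y - X` is positive semidefinite. -/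
def LoewnerLE {E : Type*} [NormedAddCommGroup E] [InnerProductSpace ℝ E]
    (X Y : E →ₗ[ℝ] E) : Prop :=
  ∀ u : E, ⟪u, X u⟫ ≤ ⟪u, Y u⟫

/-- The `A`-norm `‖u‖_A = ⟪u, A u⟫ ^ (1/2)`. -/
def anorm {E : Type*} [NormedAddCommGroup E] [InnerProductSpace ℝ E]
    (A : E →ₗ[ℝ] E) (u : E) : ℝ :=
  Real.sqrt ⟪u, A u⟫


namespace LinearMap

variable {E : Type*} [NormedAddCommGroup E] [InnerProductSpace ℝ E] {A Ai : E →ₗ[ℝ] E}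

lemma apply_apply_of_comp_eq_id (h : A ∘ₗ Ai = id) (u : E) : A (Ai u) = u :=
  LinearMap.congr_fun h u

lemma IsPositive.inner_sq_le (hA : A.IsPositive) (u v : E) :
    ⟪u, A v⟫ ^ 2 ≤ ⟪u, A u⟫ * ⟪v, A v⟫ := by
  have hvu : ⟪v, A u⟫ = ⟪u, A v⟫ := by rw [← hA.isSymmetric, real_inner_comm]
  have hquad : ∀ t : ℝ, 0 ≤ ⟪v, A v⟫ * (t * t) + 2 * ⟪u, A v⟫ * t + ⟪u, A u⟫ := fun t => by
    have := hA.inner_nonneg_right (u + t • v)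
    simp only [map_add, map_smul, inner_add_left, inner_add_right, real_inner_smul_left,
      real_inner_smul_right, hvu] at this
    linarith
  have := discrim_le_zero hquad
  rw [discrim] at this
  linarith

lemma IsSymmetric.isPositive_of_inner_pos (hA : A.IsSymmetric)
    (hpos : ∀ u : E, u ≠ 0 → 0 < ⟪u, A u⟫) : A.IsPositive := by
  refine (isPositive_iff A).2 ⟨hA, fun u => ?_⟩
  rcases eq_or_ne u 0 with rfl | hu
  · simp
  · rw [real_inner_comm]
    exact (hpos u hu).le

lemma IsPositive.of_comp_eq_id (hA : A.IsPositive) (h : A ∘ₗ Ai = id) : Ai.IsPositive := by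
  have hAAi := apply_apply_of_comp_eq_id h
  refine (isPositive_iff Ai).2 ⟨fun u v => ?_, fun u => ?_⟩
  · calc ⟪Ai u, v⟫ = ⟪Ai u, A (Ai v)⟫ := by rw [hAAi]
      _ = ⟪u, Ai v⟫ := by rw [← hA.isSymmetric, hAAi]
  · simpa only [hAAi] using hA.inner_nonneg_right (Ai u)

end LinearMap

section anorm

variable {E : Type*} [NormedAddCommGroup E] [InnerProductSpace ℝ E] {A Ai : E →ₗ[ℝ] E}

lemma sq_anorm (hA : A.IsPositive) (u : E) : anorm A u ^ 2 = ⟪u, A u⟫ :=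
  Real.sq_sqrt (hA.inner_nonneg_right u)

lemma anorm_nonneg (u : E) : 0 ≤ anorm A u := Real.sqrt_nonneg _

lemma anorm_smul (c : ℝ) (u : E) : anorm A (c • u) = |c| * anorm A u := by
  rw [anorm, anorm, map_smul, real_inner_smul_left, real_inner_smul_right, ← mul_assoc,
    Real.sqrt_mul (mul_self_nonneg c), Real.sqrt_mul_self_eq_abs]

lemma anorm_neg (u : E) : anorm A (-u) = anorm A u := by
  rw [anorm, anorm, map_neg, inner_neg_neg]

lemma abs_inner_le_anorm_mul_anorm (hA : A.IsPositive) (u v : E) :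
    |⟪u, A v⟫| ≤ anorm A u * anorm A v := by
  rw [anorm, anorm, ← Real.sqrt_mul (hA.inner_nonneg_right u)]
  exact Real.abs_le_sqrt (hA.inner_sq_le u v)

lemma anorm_add_le (hA : A.IsPositive) (u v : E) :
    anorm A (u + v) ≤ anorm A u + anorm A v := by
  have hvu : ⟪v, A u⟫ = ⟪u, A v⟫ := by rw [← hA.isSymmetric, real_inner_comm]
  have hcross := (abs_le.1 (abs_inner_le_anorm_mul_anorm hA u v)).2
  rw [anorm, Real.sqrt_le_left (add_nonneg (anorm_nonneg u) (anorm_nonneg v))]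
  calc ⟪u + v, A (u + v)⟫ = ⟪u, A u⟫ + 2 * ⟪u, A v⟫ + ⟪v, A v⟫ := by
        simp only [map_add, inner_add_left, inner_add_right, hvu]; ring
    _ ≤ anorm A u ^ 2 + 2 * (anorm A u * anorm A v) + anorm A v ^ 2 := by
        rw [sq_anorm hA, sq_anorm hA]; linarith
    _ = (anorm A u + anorm A v) ^ 2 := by ring

lemma anorm_apply_of_comp_eq_id (h : A ∘ₗ Ai = LinearMap.id) (u : E) :
    anorm A (Ai u) = anorm Ai u := by
  rw [anorm, anorm, LinearMap.apply_apply_of_comp_eq_id h, real_inner_comm]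

lemma inner_le_anorm_mul_anorm_of_comp_eq_id (hA : A.IsPositive) (h : A ∘ₗ Ai = LinearMap.id)
    (d q : E) : ⟪d, q⟫ ≤ anorm Ai d * anorm A q := by
  calc ⟪d, q⟫ = ⟪Ai d, A q⟫ := by
        rw [← hA.isSymmetric, LinearMap.apply_apply_of_comp_eq_id h]
    _ ≤ anorm A (Ai d) * anorm A q := (le_abs_self _).trans (abs_inner_le_anorm_mul_anorm hA _ _)
    _ = anorm Ai d * anorm A q := by rw [anorm_apply_of_comp_eq_id h]

end anorm

namespace LoewnerLE

variable {E : Type*} [NormedAddCommGroup E] [InnerProductSpace ℝ E]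

lemma inner_inv_le_inner_inv {A B Ai Bi : E →ₗ[ℝ] E} (hA : A.IsPositive) (hAB : LoewnerLE A B)
    (hAi : A ∘ₗ Ai = LinearMap.id) (hBi : B ∘ₗ Bi = LinearMap.id) (z : E) :
    ⟪z, Bi z⟫ ≤ ⟪z, Ai z⟫ := by
  -- `⟪z, Bi z⟫ = ⟪Bi z, A (Ai z)⟫`, and Cauchy–Schwarz for `A` with `A ≼ B` bounds its square
  -- by `⟪z, Bi z⟫ ⟪z, Ai z⟫`
  have hAAi := LinearMap.apply_apply_of_comp_eq_id hAi
  have hBBi := LinearMap.apply_apply_of_comp_eq_id hBi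
  set w := Bi z
  have hB : ⟪z, w⟫ = ⟪w, B w⟫ := by rw [hBBi, real_inner_comm]
  have hA_le : ⟪w, A w⟫ ≤ ⟪z, w⟫ := hB ▸ hAB w
  have hcs := hA.inner_sq_le w (Ai z)
  have hs0 := hA.inner_nonneg_right (Ai z)
  rw [hAAi, real_inner_comm z w, real_inner_comm z (Ai z)] at hcs
  rw [hAAi, real_inner_comm z (Ai z)] at hs0
  have hw := hA.inner_nonneg_right w
  nlinarith

lemma inner_inv_apply_le {D T Ti : E →ₗ[ℝ] E} {δ : ℝ} (hD : D.IsPositive) (hδ : 0 ≤ δ)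
    (hDT : LoewnerLE D (δ • T)) (hTi : T ∘ₗ Ti = LinearMap.id) (y : E) :
    ⟪D y, Ti (D y)⟫ ≤ δ * ⟪y, D y⟫ := by
  -- Cauchy–Schwarz for `D`: `⟪D y, w⟫² ≤ ⟪w, D w⟫ ⟪y, D y⟫ ≤ δ ⟪D y, w⟫ ⟪y, D y⟫`
  set w := Ti (D y)
  have hwT : ⟪w, (δ • T) w⟫ = δ * ⟪D y, w⟫ := by
    rw [LinearMap.smul_apply, LinearMap.apply_apply_of_comp_eq_id hTi, real_inner_smul_right,
      real_inner_comm]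
  have hcs := hD.inner_sq_le w y
  rw [real_inner_comm (D y) w] at hcs
  have hwD := hDT w
  rw [hwT] at hwD
  have hw0 := hD.inner_nonneg_right w
  have hy0 := hD.inner_nonneg_right y
  nlinarith [mul_le_mul_of_nonneg_right hwD hy0, mul_nonneg hδ hy0]

end LoewnerLE

lemma anorm_inv_sub_apply_le {E : Type*} [NormedAddCommGroup E] [InnerProductSpace ℝ E]
    {S St Sinv Stinv : E →ₗ[ℝ] E} {δ : ℝ} (hS : S.IsPositive) (hSt : St.IsPositive)
    (hSinv : S ∘ₗ Sinv = LinearMap.id) (hStinv : St ∘ₗ Stinv = LinearMap.id)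
    (hδ0 : 0 ≤ δ) (hδ1 : δ < 1)
    (h₁ : LoewnerLE ((1 - δ) • St) S) (h₂ : LoewnerLE S St) (y : E) :
    anorm Sinv ((St - S) y) ≤ δ / (1 - δ) * anorm S y := by
  have hδ1' : 0 < 1 - δ := sub_pos.2 hδ1
  have hlow (u : E) : (1 - δ) * ⟪u, St u⟫ ≤ ⟪u, S u⟫ := by
    simpa only [LinearMap.smul_apply, real_inner_smul_right] using h₁ u
  have hgap : (St - S).IsPositive := by
    refine (LinearMap.isPositive_iff _).2 ⟨hSt.isSymmetric.sub hS.isSymmetric, fun u => ?_⟩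
    rw [real_inner_comm, LinearMap.sub_apply, inner_sub_right, sub_nonneg]
    exact h₂ u
  have hgap_le : LoewnerLE (St - S) (δ • St) := fun u => by
    simp only [LinearMap.sub_apply, LinearMap.smul_apply, inner_sub_right, real_inner_smul_right]
    linarith [hlow u]
  set x := (St - S) y
  have hinv : ⟪x, Sinv x⟫ ≤ (1 - δ)⁻¹ * ⟪x, Stinv x⟫ := by
    have hcomp : ((1 - δ) • St) ∘ₗ ((1 - δ)⁻¹ • Stinv) = LinearMap.id := by
      rw [LinearMap.smul_comp, LinearMap.comp_smul, hStinv, smul_smul,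
        mul_inv_cancel₀ hδ1'.ne', one_smul]
    simpa only [LinearMap.smul_apply, real_inner_smul_right] using
      h₁.inner_inv_le_inner_inv (hSt.smul_of_nonneg hδ1'.le) hcomp hSinv x
  have hx : ⟪x, Stinv x⟫ ≤ δ * ⟪y, x⟫ := hgap_le.inner_inv_apply_le hgap hδ0 hStinv y
  have hy : ⟪y, x⟫ ≤ δ / (1 - δ) * ⟪y, S y⟫ := by
    rw [div_mul_eq_mul_div, le_div_iff₀ hδ1']
    simp only [x, LinearMap.sub_apply, inner_sub_right]
    nlinarith [hlow y, hSt.inner_nonneg_right y]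
  have hSy := hS.inner_nonneg_right y
  rw [anorm, Real.sqrt_le_left (mul_nonneg (div_nonneg hδ0 hδ1'.le) (anorm_nonneg y)), mul_pow,
    sq_anorm hS]
  calc ⟪x, Sinv x⟫ ≤ (1 - δ)⁻¹ * (δ * (δ / (1 - δ) * ⟪y, S y⟫)) :=
        hinv.trans (mul_le_mul_of_nonneg_left (hx.trans (mul_le_mul_of_nonneg_left hy hδ0))
          (inv_nonneg.2 hδ1'.le))
    _ = (δ / (1 - δ)) ^ 2 * ⟪y, S y⟫ := by ring

section Bregman

variable {E : Type*} [NormedAddCommGroup E] [InnerProductSpace ℝ E] (f : E → ℝ) (grad : E → E)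

def bregman (u v : E) : ℝ := f u - f v - ⟪grad v, u - v⟫

lemma bregman_add_bregman (u v : E) :
    bregman f grad u v + bregman f grad v u = ⟪grad u - grad v, u - v⟫ := by
  simp only [bregman, inner_sub_left, inner_sub_right]
  ring

variable {f grad} {M Minv : E →ₗ[ℝ] E} {μ L : ℝ}

lemma mul_inner_le_inner_grad_sub
    (hlow : ∀ u v, μ / 2 * ⟪u - v, M (u - v)⟫ ≤ bregman f grad u v) (u v : E) :
    μ * ⟪u - v, M (u - v)⟫ ≤ ⟪grad u - grad v, u - v⟫ := by
  have hvu := hlow v u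
  rw [← neg_sub u v, map_neg, inner_neg_neg] at hvu
  linarith [hlow u v, bregman_add_bregman f grad u v]

lemma inner_grad_sub_inv_le_bregman (hL : 0 < L) (hMinv : M ∘ₗ Minv = LinearMap.id)
    (hconv : ∀ u v, 0 ≤ bregman f grad u v)
    (hupp : ∀ u v, bregman f grad u v ≤ L / 2 * ⟪u - v, M (u - v)⟫) (u v : E) :
    ⟪grad u - grad v, Minv (grad u - grad v)⟫ ≤ 2 * L * bregman f grad u v := by
  set d := grad u - grad v
  set k := ⟪d, Minv d⟫
  -- evaluate `f` at the gradient step `w`: convexity from `v`, smoothness from `u`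
  set w := u - L⁻¹ • Minv d
  have hwu : w - u = -(L⁻¹ • Minv d) := by simp only [w]; abel
  have hwv : w - v = (u - v) - L⁻¹ • Minv d := by simp only [w]; abel
  have hup := hupp w u
  have hconv_wv := hconv w v
  rw [hwu, map_neg, inner_neg_neg, map_smul, LinearMap.apply_apply_of_comp_eq_id hMinv,
    real_inner_smul_left, real_inner_smul_right, real_inner_comm] at hup
  simp only [bregman, hwu, hwv, inner_neg_right, inner_sub_right, real_inner_smul_right]
    at hup hconv_wv ⊢
  have hk : L⁻¹ * ⟪grad u, Minv d⟫ - L⁻¹ * ⟪grad v, Minv d⟫ = L⁻¹ * k := by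
    rw [← mul_sub, ← inner_sub_left]
  have hsmooth : L / 2 * (L⁻¹ * (L⁻¹ * k)) = L⁻¹ * k / 2 := by field_simp
  have hLk : k = 2 * L * (L⁻¹ * k / 2) := by field_simp
  rw [hLk]
  exact mul_le_mul_of_nonneg_left (by linarith) (by positivity)

lemma inner_grad_sub_inv_le (hL : 0 < L) (hMinv : M ∘ₗ Minv = LinearMap.id)
    (hconv : ∀ u v, 0 ≤ bregman f grad u v)
    (hupp : ∀ u v, bregman f grad u v ≤ L / 2 * ⟪u - v, M (u - v)⟫) (u v : E) :
    ⟪grad u - grad v, Minv (grad u - grad v)⟫ ≤ L * ⟪grad u - grad v, u - v⟫ := by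
  have huv := inner_grad_sub_inv_le_bregman hL hMinv hconv hupp u v
  have hvu := inner_grad_sub_inv_le_bregman hL hMinv hconv hupp v u
  rw [← neg_sub (grad u) (grad v), map_neg, inner_neg_neg] at hvu
  rw [← bregman_add_bregman f grad u v]
  linarith

lemma anorm_grad_sub_le_of_inner_eq (hμ : 0 < μ) (hμL : μ ≤ L) (hM : M.IsPositive)
    (hMinv : M ∘ₗ Minv = LinearMap.id)
    (hlow : ∀ u v, μ / 2 * ⟪u - v, M (u - v)⟫ ≤ bregman f grad u v)
    (hupp : ∀ u v, bregman f grad u v ≤ L / 2 * ⟪u - v, M (u - v)⟫) {u v q : E}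
    (hq : ⟪grad u - grad v, u - v⟫ = ⟪grad u - grad v, q⟫) :
    anorm Minv (grad u - grad v) ≤ L * anorm M q ∧ anorm M (u - v) ≤ √(L / μ) * anorm M q := by
  have hL : 0 < L := hμ.trans_le hμL
  have hconv (u v : E) : 0 ≤ bregman f grad u v :=
    (mul_nonneg (by positivity) (hM.inner_nonneg_right _)).trans (hlow u v)
  have hPR : ⟪grad u - grad v, u - v⟫ ≤ anorm Minv (grad u - grad v) * anorm M q :=
    hq ▸ inner_le_anorm_mul_anorm_of_comp_eq_id hM hMinv _ q
  have hD2 : anorm Minv (grad u - grad v) ^ 2 ≤ L * ⟪grad u - grad v, u - v⟫ := by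
    rw [sq_anorm (hM.of_comp_eq_id hMinv)]
    exact inner_grad_sub_inv_le hL hMinv hconv hupp u v
  have hE2 : μ * anorm M (u - v) ^ 2 ≤ ⟪grad u - grad v, u - v⟫ := by
    rw [sq_anorm hM]
    exact mul_inner_le_inner_grad_sub hlow u v
  have hD0 := anorm_nonneg (A := Minv) (grad u - grad v)
  have hR0 := anorm_nonneg (A := M) q
  have hDR : anorm Minv (grad u - grad v) ≤ L * anorm M q := by
    nlinarith [mul_le_mul_of_nonneg_left hPR hL.le, mul_nonneg hL.le hR0]
  refine ⟨hDR, ?_⟩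
  rw [← Real.sqrt_sq hR0, ← Real.sqrt_mul (div_nonneg hL.le hμ.le),
    Real.le_sqrt (anorm_nonneg _) (by positivity), div_mul_eq_mul_div, le_div_iff₀ hμ]
  nlinarith [mul_le_mul_of_nonneg_right hDR hR0]

end Bregman

section Projection

variable {V W : Type*} [NormedAddCommGroup V] [InnerProductSpace ℝ V]
  [NormedAddCommGroup W] [InnerProductSpace ℝ W] {M Minv : V →ₗ[ℝ] V} {B : V →ₗ[ℝ] W}

lemma inner_sub_eq_of_forall_ker {g g' w q : V} (hg : ∀ v, B v = 0 → ⟪g, v⟫ = 0)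
    (hg' : ∀ v, B v = 0 → ⟪g', v⟫ = 0) (hwq : B w = B q) : ⟪g - g', w⟫ = ⟪g - g', q⟫ := by
  have hker : B (w - q) = 0 := by rw [map_sub, hwq, sub_self]
  rw [← sub_eq_zero, ← inner_sub_right, inner_sub_left, hg _ hker, hg' _ hker, sub_zero]

variable [FiniteDimensional ℝ V] [FiniteDimensional ℝ W]

lemma exists_dual_of_eq_inexact_projection {St Stinv : W →ₗ[ℝ] W} {Pt : V →ₗ[ℝ] V}
    (hMinv : M ∘ₗ Minv = LinearMap.id) (hStinv : St ∘ₗ Stinv = LinearMap.id)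
    (hPt : Pt = LinearMap.id - Minv ∘ₗ LinearMap.adjoint B ∘ₗ Stinv ∘ₗ B) {α : ℝ} {u g : V}
    (hfix : u = Pt (u - α • Minv g)) :
    ∃ y : W, α • g = -LinearMap.adjoint B y ∧ B u = (St - B ∘ₗ Minv ∘ₗ LinearMap.adjoint B) y := by
  set y := Stinv (B (u - α • Minv g))
  have hfix' : u = u - α • Minv g - Minv (LinearMap.adjoint B y) := by
    subst hPt; exact hfix
  refine ⟨y, ?_, ?_⟩
  · have h0 : Minv (α • g + LinearMap.adjoint B y) = 0 := by
      rw [map_add, map_smul]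
      linear_combination (norm := module) hfix'
    have h1 := congrArg M h0
    rw [LinearMap.apply_apply_of_comp_eq_id hMinv, map_zero] at h1
    exact eq_neg_of_add_eq_zero_left h1
  · calc B u = B (u - α • Minv g) - B (Minv (LinearMap.adjoint B y)) := by
          conv_lhs => rw [hfix']
          rw [map_sub]
      _ = (St - B ∘ₗ Minv ∘ₗ LinearMap.adjoint B) y := by
          rw [LinearMap.sub_apply, LinearMap.apply_apply_of_comp_eq_id hStinv]
          rfl

lemma anorm_comp_adjoint (T : V →ₗ[ℝ] V) (y : W) :
    anorm (B ∘ₗ T ∘ₗ LinearMap.adjoint B) y = anorm T (LinearMap.adjoint B y) := by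
  rw [anorm, anorm, LinearMap.adjoint_inner_left]
  rfl

lemma exists_apply_eq_anorm_eq {Sinv : W →ₗ[ℝ] W} (hMinv : M ∘ₗ Minv = LinearMap.id)
    (hSinv : (B ∘ₗ Minv ∘ₗ LinearMap.adjoint B) ∘ₗ Sinv = LinearMap.id) (x : W) :
    ∃ q : V, B q = x ∧ anorm M q = anorm Sinv x := by
  have hBq : B (Minv (LinearMap.adjoint B (Sinv x))) = x :=
    LinearMap.apply_apply_of_comp_eq_id hSinv x
  refine ⟨_, hBq, ?_⟩
  rw [anorm, anorm, LinearMap.apply_apply_of_comp_eq_id hMinv, LinearMap.adjoint_inner_right,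
    hBq]

lemma inner_eq_zero_of_smul_eq_neg_adjoint {α : ℝ} (hα : α ≠ 0) {g : V} {y : W}
    (hgy : α • g = -LinearMap.adjoint B y) {v : V} (hv : B v = 0) : ⟪g, v⟫ = 0 := by
  have h : α * ⟪g, v⟫ = 0 := by
    rw [← real_inner_smul_left, hgy, inner_neg_left, LinearMap.adjoint_inner_left, hv,
      inner_zero_right, neg_zero]
  exact (mul_eq_zero.1 h).resolve_left hα

end Projection

section Scalar

variable {μ L δ α N G D Em R : ℝ}

lemma le_one_div_four_of_le (hμ : 0 < μ) (hμL : μ ≤ L) (hδκ : δ ≤ 1 / (4 * (L / μ))) :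
    δ ≤ 1 / 4 :=
  hδκ.trans <| by
    gcongr
    linarith [(one_le_div hμ).2 hμL]

lemma le_three_halves_mul_and_le_two_mul (hμ : 0 < μ) (hμL : μ ≤ L) (hδ0 : 0 < δ)
    (hδκ : δ ≤ 1 / (4 * (L / μ))) (hα0 : 0 < α) (hαL : α ≤ 1 / L) (hG : 0 ≤ G)
    (hR : R ≤ δ / (1 - δ) * (α * G)) (hDR : D ≤ L * R) (hGND : G ≤ N + D) :
    G ≤ 3 / 2 * N ∧ R ≤ 2 * δ * α * N := by
  have hL : 0 < L := hμ.trans_le hμL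
  have hδ14 := le_one_div_four_of_le hμ hμL hδκ
  have hc : δ / (1 - δ) ≤ 4 / 3 * δ := by
    rw [div_le_iff₀ (by linarith)]
    nlinarith
  have hLα : L * α ≤ 1 := by rwa [le_div_iff₀ hL, mul_comm] at hαL
  have hRG : R ≤ 4 / 3 * δ * α * G := hR.trans <| by
    rw [mul_assoc (4 / 3 * δ)]
    gcongr
  have hDG : D ≤ G / 3 := by
    nlinarith [mul_le_mul_of_nonneg_left hRG hL.le, mul_nonneg hδ0.le hG,
      mul_le_mul_of_nonneg_left hLα (mul_nonneg hδ0.le hG)]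
  have hG32 : G ≤ 3 / 2 * N := by linarith
  refine ⟨hG32, hRG.trans ?_⟩
  nlinarith [mul_le_mul_of_nonneg_left hG32 (mul_nonneg hδ0.le hα0.le)]

lemma fixed_point_bounds_of_residual_le (hμ : 0 < μ) (hμL : μ ≤ L) (hδ0 : 0 < δ)
    (hδκ : δ ≤ 1 / (4 * (L / μ))) (hα0 : 0 < α) (hαL : α ≤ 1 / L) (hN : 0 ≤ N) (hG : 0 ≤ G)
    (hR : R ≤ δ / (1 - δ) * (α * G)) (hDR : D ≤ L * R) (hEmR : Em ≤ √(L / μ) * R)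
    (hGND : G ≤ N + D) :
    Em ≤ 3 * √(L / μ) * (√μ)⁻¹ * δ * √α * N ∧ D ≤ 3 * √L * (L / μ) * δ * √α * N ∧
      G ≤ 2 * N := by
  obtain ⟨hG32, hRN⟩ := le_three_halves_mul_and_le_two_mul hμ hμL hδ0 hδκ hα0 hαL hG hR hDR hGND
  have hL : 0 < L := hμ.trans_le hμL
  have hα : √α * √α = α := Real.mul_self_sqrt hα0.le
  have hsqα : √α ≤ (√μ)⁻¹ := by
    rw [← Real.sqrt_inv]
    exact Real.sqrt_le_sqrt (hαL.trans (by rw [one_div]; exact inv_anti₀ hμ hμL))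
  have hLα : √L * √α ≤ 1 := by
    rw [← Real.sqrt_mul hL.le, Real.sqrt_le_one]
    rwa [le_div_iff₀ hL, mul_comm] at hαL
  have hκ : 1 ≤ L / μ := (one_le_div hμ).2 hμL
  refine ⟨?_, ?_, by linarith⟩
  · calc Em ≤ √(L / μ) * (2 * δ * α * N) := hEmR.trans (by gcongr)
      _ = 2 * √(L / μ) * δ * √α * N * √α := by linear_combination (-2 * √(L / μ) * δ * N) * hα
      _ ≤ 2 * √(L / μ) * δ * √α * N * (√μ)⁻¹ := by gcongr
      _ ≤ 3 * √(L / μ) * (√μ)⁻¹ * δ * √α * N := by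
          have : 0 ≤ √(L / μ) * (√μ)⁻¹ * δ * √α * N := by positivity
          linarith
  · calc D ≤ L * (2 * δ * α * N) := hDR.trans (by gcongr)
      _ = 2 * √L * δ * √α * N * (√L * √α) := by
          linear_combination (-2 * δ * N) * (√L * √L * hα + α * Real.mul_self_sqrt hL.le)
      _ ≤ 2 * √L * δ * √α * N * 1 := by gcongr
      _ ≤ 3 * √L * (L / μ) * δ * √α * N := by
          have : 0 ≤ √L * δ * √α * N := by positivity
          nlinarith [mul_le_mul_of_nonneg_left hκ this]

end Scalar

theorem stmt12_general {V W : Type*}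
    [NormedAddCommGroup V] [InnerProductSpace ℝ V] [FiniteDimensional ℝ V]
    [NormedAddCommGroup W] [InnerProductSpace ℝ W] [FiniteDimensional ℝ W]
    (M Minv : V →ₗ[ℝ] V) (hMsym : M.IsSymmetric)
    (hMpos : ∀ u : V, u ≠ 0 → 0 < ⟪u, M u⟫)
    (hMinv' : M ∘ₗ Minv = LinearMap.id)
    (B : V →ₗ[ℝ] W)
    (S Sinv : W →ₗ[ℝ] W) (hS : S = B ∘ₗ Minv ∘ₗ LinearMap.adjoint B)
    (hSinv' : S ∘ₗ Sinv = LinearMap.id)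
    (St Stinv : W →ₗ[ℝ] W) (hStsym : St.IsSymmetric)
    (hStpos : ∀ w : W, w ≠ 0 → 0 < ⟪w, St w⟫)
    (hStinv' : St ∘ₗ Stinv = LinearMap.id)
    (Pt : V →ₗ[ℝ] V)
    (hPt : Pt = LinearMap.id - Minv ∘ₗ LinearMap.adjoint B ∘ₗ Stinv ∘ₗ B)
    (f : V → ℝ) (gradf : V → V)
    (μ L : ℝ) (hμ : 0 < μ) (hμL : μ ≤ L)
    (hlow : ∀ u v : V, μ / 2 * ⟪u - v, M (u - v)⟫ ≤ f u - f v - ⟪gradf v, u - v⟫)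
    (hupp : ∀ u v : V, f u - f v - ⟪gradf v, u - v⟫ ≤ L / 2 * ⟪u - v, M (u - v)⟫)
    (δstar : ℝ) (hδ0 : 0 < δstar) (hδκ : δstar ≤ 1 / (4 * (L / μ)))
    (h₁ : LoewnerLE ((1 - δstar) • St) S) (h₂ : LoewnerLE S St)
    (αstar : ℝ) (hα0 : 0 < αstar) (hαL : αstar ≤ 1 / L)
    (ustar : V) (hustar : B ustar = 0)
    (hopt : ∀ v : V, B v = 0 → ⟪gradf ustar, v⟫ = 0)
    (uphi : V) (hfix : uphi = Pt (uphi - αstar • Minv (gradf uphi)))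
 :
    anorm M (uphi - ustar) ≤
        3 * Real.sqrt (L / μ) * (Real.sqrt μ)⁻¹ * δstar * Real.sqrt αstar *
          anorm Minv (gradf ustar) ∧
      anorm Minv (gradf uphi - gradf ustar) ≤
        3 * Real.sqrt L * (L / μ) * δstar * Real.sqrt αstar *
          anorm Minv (gradf ustar) ∧
      anorm Minv (gradf uphi) ≤ 2 * anorm Minv (gradf ustar) := by
  have hM : M.IsPositive := hMsym.isPositive_of_inner_pos hMpos
  have hMinvPos : Minv.IsPositive := hM.of_comp_eq_id hMinv'
  have hSPos : S.IsPositive := hS ▸ hMinvPos.conj_adjoint B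
  have hδ1 : δstar < 1 := (le_one_div_four_of_le hμ hμL hδκ).trans_lt (by norm_num)
  obtain ⟨y, hgy, hBu⟩ := exists_dual_of_eq_inexact_projection hMinv' hStinv' hPt hfix
  obtain ⟨q, hBq, hq⟩ := exists_apply_eq_anorm_eq hMinv' (hS ▸ hSinv') (B uphi)
  have hR : anorm M q ≤ δstar / (1 - δstar) * (αstar * anorm Minv (gradf uphi)) := by
    rw [hq, hBu, ← hS]
    refine (anorm_inv_sub_apply_le hSPos (hStsym.isPositive_of_inner_pos hStpos) hSinv' hStinv'
      hδ0.le hδ1 h₁ h₂ y).trans_eq ?_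
    rw [hS, anorm_comp_adjoint, ← neg_eq_iff_eq_neg.2 hgy, anorm_neg, anorm_smul, abs_of_pos hα0]
  have hgap : ⟪gradf uphi - gradf ustar, uphi - ustar⟫ = ⟪gradf uphi - gradf ustar, q⟫ :=
    inner_sub_eq_of_forall_ker (fun _ => inner_eq_zero_of_smul_eq_neg_adjoint hα0.ne' hgy) hopt
      (by rw [map_sub, hustar, sub_zero, hBq])
  obtain ⟨hDR, hEmR⟩ := anorm_grad_sub_le_of_inner_eq hμ hμL hM hMinv' hlow hupp hgap
  have hGND := anorm_add_le hMinvPos (gradf ustar) (gradf uphi - gradf ustar)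
  rw [add_sub_cancel] at hGND
  exact fixed_point_bounds_of_residual_le hμ hμL hδ0 hδκ hα0 hαL (anorm_nonneg _)
    (anorm_nonneg _) hR hDR hEmR hGND

theorem stmt12 {V W : Type*}
    [NormedAddCommGroup V] [InnerProductSpace ℝ V] [FiniteDimensional ℝ V]
    [NormedAddCommGroup W] [InnerProductSpace ℝ W] [FiniteDimensional ℝ W]
    (M Minv : V →ₗ[ℝ] V) (hMsym : M.IsSymmetric)
    (hMpos : ∀ u : V, u ≠ 0 → 0 < ⟪u, M u⟫)
    (hMinv : Minv ∘ₗ M = LinearMap.id) (hMinv' : M ∘ₗ Minv = LinearMap.id)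
    (B : V →ₗ[ℝ] W) (hB : Function.Surjective B)
    (S Sinv : W →ₗ[ℝ] W) (hS : S = B ∘ₗ Minv ∘ₗ LinearMap.adjoint B)
    (hSinv : Sinv ∘ₗ S = LinearMap.id) (hSinv' : S ∘ₗ Sinv = LinearMap.id)
    (St Stinv : W →ₗ[ℝ] W) (hStsym : St.IsSymmetric)
    (hStpos : ∀ w : W, w ≠ 0 → 0 < ⟪w, St w⟫)
    (hStinv : Stinv ∘ₗ St = LinearMap.id) (hStinv' : St ∘ₗ Stinv = LinearMap.id)
    (PM Pt : V →ₗ[ℝ] V)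
    (hPM : PM = LinearMap.id - Minv ∘ₗ LinearMap.adjoint B ∘ₗ Sinv ∘ₗ B)
    (hPt : Pt = LinearMap.id - Minv ∘ₗ LinearMap.adjoint B ∘ₗ Stinv ∘ₗ B)
    (f : V → ℝ) (gradf : V → V) (hf : ∀ x : V, HasGradientAt f (gradf x) x)
    (μ L : ℝ) (hμ : 0 < μ) (hμL : μ ≤ L)
    (hlow : ∀ u v : V, μ / 2 * ⟪u - v, M (u - v)⟫ ≤ f u - f v - ⟪gradf v, u - v⟫)
    (hupp : ∀ u v : V, f u - f v - ⟪gradf v, u - v⟫ ≤ L / 2 * ⟪u - v, M (u - v)⟫)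
    (δstar : ℝ) (hδ0 : 0 < δstar) (hδκ : δstar ≤ 1 / (4 * (L / μ)))
    (h₁ : LoewnerLE ((1 - δstar) • St) S) (h₂ : LoewnerLE S St)
    (αstar : ℝ) (hα0 : 0 < αstar) (hαL : αstar ≤ 1 / L)
    (ustar : V) (hustar : B ustar = 0)
    (hopt : ∀ v : V, B v = 0 → ⟪gradf ustar, v⟫ = 0)
    (uphi : V) (hfix : uphi = Pt (uphi - αstar • Minv (gradf uphi)))
 :
    anorm M (uphi - ustar) ≤
        3 * Real.sqrt (L / μ) * (Real.sqrt μ)⁻¹ * δstar * Real.sqrt αstar *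
          anorm Minv (gradf ustar) ∧
      anorm Minv (gradf uphi - gradf ustar) ≤
        3 * Real.sqrt L * (L / μ) * δstar * Real.sqrt αstar *
          anorm Minv (gradf ustar) ∧
      anorm Minv (gradf uphi) ≤ 2 * anorm Minv (gradf ustar) :=
  stmt12_general M Minv hMsym hMpos hMinv' B S Sinv hS hSinv' St Stinv hStsym hStpos hStinv' Pt hPt
    f gradf μ L hμ hμL hlow hupp δstar hδ0 hδκ h₁ h₂ αstar hα0 hαL ustar hustar hopt uphi hfix
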